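/- If a PA A has a sequence of finite words (w_i)_{i≥1} with P_A(w_i) > 1 − 2^{−i}, and C is built from A so that after reading w_i from the initial distribution the mass on q_f equals P_A(w_i), and # resets C to its initial distribution, then the infinite word v = w_1 # w_2 # w_3 # ⋯ satisfies limsup_{n→∞} ‖C^v_n‖ = 1, i.e., v is weakly synchronizing for C. -/

import Mathlib

open Filter Finset

/-- A probability distribution on a finite type. -/
def IsDist {Q : Type*} [Fintype Q] (d : Q → ℝ) : Prop :=
  (∀ q, 0 ≤ d q) ∧ ∑ q, d q = 1

/-- The norm of a distribution: its maximal value. -/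
noncomputable def dnorm {Q : Type*} [Fintype Q] [Nonempty Q] (d : Q → ℝ) : ℝ :=
  Finset.univ.sup' Finset.univ_nonempty d

/-- A probabilistic automaton over states `Q` and alphabet `A`. -/
structure PA (Q : Type*) (A : Type*) [Fintype Q] where
  init : Q → ℝ
  init_dist : IsDist init
  trans : Q → A → Q → ℝ
  trans_dist : ∀ q σ, IsDist (trans q σ)

variable {Q A : Type*} [Fintype Q]

/-- One transition step applied to a distribution. -/
def PAstep (M : PA Q A) (d : Q → ℝ) (σ : A) : Q → ℝ :=
  fun q => ∑ q', d q' * M.trans q' σ q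

/-- Computation of a PA on a finite word, starting from distribution `μ`. -/
def PArun (M : PA Q A) (μ : Q → ℝ) (w : List A) : Q → ℝ :=
  w.foldl (PAstep M) μ

/-- Outcome of a PA on an infinite word, started from `μ`. -/
def PAoutcomeFrom (M : PA Q A) (μ : Q → ℝ) (w : ℕ → A) : ℕ → Q → ℝ
  | 0 => μ
  | n + 1 => PAstep M (PAoutcomeFrom M μ w n) (w n)

/-- Outcome of a PA on an infinite word from the initial distribution. -/
def PAoutcome (M : PA Q A) (w : ℕ → A) : ℕ → Q → ℝ :=
  PAoutcomeFrom M M.init w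

/-- The prefix `w_1 # w_2 # ⋯ w_k #` of the infinite word `w_1 # w_2 # ⋯`. -/
def blocks {A : Type*} (ws : ℕ → List A) (hash : A) : ℕ → List A
  | 0 => []
  | k + 1 => blocks ws hash k ++ ws (k + 1) ++ [hash]

/-- The infinite word `w_1 # w_2 # w_3 # ⋯`. -/
def interleave {A : Type*} (ws : ℕ → List A) (hash : A) : ℕ → A :=
  fun n => (blocks ws hash (n + 1)).getD n hash

/-!
Each reset letter `#` brings `C` back to its initial distribution, so right after the block
`w_{k+1}` of `v` has been read the outcome of `C` is exactly the run of `C` on `w_{k+1}`. Its norm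
is therefore at least its mass on `q_f`, which exceeds `1 - 2^{-(k+1)}`. Along these times the
norms tend to `1`, and no norm exceeds `1`, so the limsup is `1`.
-/

open Topology

theorem limsup_eq_of_le_of_tendsto_comp {α β γ : Type*} [ConditionallyCompleteLinearOrder γ]
    [TopologicalSpace γ] [OrderTopology γ] [DenselyOrdered γ] [NoMinOrder γ]
    {l : Filter β} {l' : Filter α} [l'.NeBot] {f : β → γ} {φ : α → β} {a : γ}
    (hle : ∀ b, f b ≤ a) (hφ : Tendsto φ l' l) (hlim : Tendsto (f ∘ φ) l' (𝓝 a)) :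
    limsup f l = a := by
  have hfreq : ∀ c < a, ∃ᶠ b in l, c ≤ f b := fun c hc =>
    hφ.frequently ((hlim.eventually (lt_mem_nhds hc)).mono fun _ h => h.le).frequently
  obtain ⟨c₀, hc₀⟩ := exists_lt a
  refine le_antisymm ?_ (le_of_forall_lt_imp_le_of_dense fun c hc => ?_)
  · exact limsup_le_of_le (IsCoboundedUnder.of_frequently_ge (hfreq c₀ hc₀))
      (Eventually.of_forall hle)
  · exact le_limsup_of_frequently_le (hfreq c hc) (isBoundedUnder_of ⟨a, hle⟩)

theorem IsDist.le_one {d : Q → ℝ} (hd : IsDist d) (q : Q) : d q ≤ 1 :=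
  hd.2 ▸ Finset.single_le_sum (fun q' _ => hd.1 q') (Finset.mem_univ q)

theorem le_dnorm [Nonempty Q] (d : Q → ℝ) (q : Q) : d q ≤ dnorm d :=
  Finset.le_sup' d (Finset.mem_univ q)

theorem IsDist.dnorm_le_one [Nonempty Q] {d : Q → ℝ} (hd : IsDist d) : dnorm d ≤ 1 :=
  Finset.sup'_le _ _ fun q _ => hd.le_one q

theorem isDist_PAstep (M : PA Q A) {d : Q → ℝ} (hd : IsDist d) (σ : A) :
    IsDist (PAstep M d σ) := by
  refine ⟨fun q => Finset.sum_nonneg fun q' _ => mul_nonneg (hd.1 q') ((M.trans_dist q' σ).1 q),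
    ?_⟩
  calc ∑ q, PAstep M d σ q = ∑ q', d q' * ∑ q, M.trans q' σ q := by
        simp only [PAstep, Finset.mul_sum]
        exact Finset.sum_comm
    _ = 1 := by simp only [fun q' => (M.trans_dist q' σ).2, mul_one, hd.2]

theorem isDist_PArun (M : PA Q A) {μ : Q → ℝ} (hμ : IsDist μ) (w : List A) :
    IsDist (PArun M μ w) := by
  induction w generalizing μ with
  | nil => exact hμ
  | cons a w ih => exact ih (isDist_PAstep M hμ a)

theorem PArun_append (M : PA Q A) (μ : Q → ℝ) (u v : List A) :
    PArun M μ (u ++ v) = PArun M (PArun M μ u) v :=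
  List.foldl_append

theorem PAoutcomeFrom_eq_PArun (M : PA Q A) (μ : Q → ℝ) (w : ℕ → A) (n : ℕ) :
    PAoutcomeFrom M μ w n = PArun M μ ((List.range n).map w) := by
  induction n with
  | zero => rfl
  | succ n ih =>
    rw [List.range_succ, List.map_append, PArun_append, ← ih]
    rfl

theorem isDist_PAoutcome (M : PA Q A) (w : ℕ → A) (n : ℕ) : IsDist (PAoutcome M w n) := by
  rw [PAoutcome, PAoutcomeFrom_eq_PArun]
  exact isDist_PArun M M.init_dist _

theorem PAstep_of_reset (M : PA Q A) {hash : A} (hreset : ∀ q, M.trans q hash = M.init)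
    {d : Q → ℝ} (hd : IsDist d) : PAstep M d hash = M.init := by
  funext q
  simp only [PAstep, hreset, ← Finset.sum_mul, hd.2, one_mul]

theorem PArun_blocks_of_reset (M : PA Q A) {hash : A} (hreset : ∀ q, M.trans q hash = M.init)
    (ws : ℕ → List A) (k : ℕ) : PArun M M.init (blocks ws hash k) = M.init := by
  induction k with
  | zero => rfl
  | succ k _ =>
    rw [blocks, PArun_append]
    exact PAstep_of_reset M hreset (isDist_PArun M M.init_dist _)

section Blocks

variable (ws : ℕ → List A) (hash : A)

theorem blocks_prefix_blocks {k m : ℕ} (h : k ≤ m) : blocks ws hash k <+: blocks ws hash m := by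
  induction m, h using Nat.le_induction with
  | base => exact List.prefix_refl _
  | succ m _ ih => exact ih.trans (by rw [blocks, List.append_assoc]; exact List.prefix_append _ _)

theorem le_length_blocks (k : ℕ) : k ≤ (blocks ws hash k).length := by
  induction k with
  | zero => exact le_rfl
  | succ k ih =>
    simp only [blocks, List.length_append, List.length_singleton]
    omega

theorem interleave_eq_getElem_blocks {i m : ℕ} (hi : i < (blocks ws hash m).length) :
    interleave ws hash i = (blocks ws hash m)[i] := by
  have hi' : i < (blocks ws hash (i + 1)).length := le_length_blocks ws hash (i + 1)
  rw [interleave, List.getD_eq_getElem _ _ hi']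
  rcases le_total (i + 1) m with h | h
  · exact (blocks_prefix_blocks ws hash h).getElem hi'
  · exact ((blocks_prefix_blocks ws hash h).getElem hi).symm

theorem map_range_interleave_of_prefix {l : List A} {m : ℕ} (hl : l <+: blocks ws hash m) :
    (List.range l.length).map (interleave ws hash) = l := by
  refine List.ext_getElem (by simp) fun i _ hi => ?_
  rw [List.getElem_map, List.getElem_range,
    interleave_eq_getElem_blocks ws hash (hi.trans_le hl.length_le), hl.getElem hi]

theorem PAoutcome_interleave_of_reset (M : PA Q A) (hreset : ∀ q, M.trans q hash = M.init)
    (k : ℕ) :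
    PAoutcome M (interleave ws hash) (blocks ws hash k ++ ws (k + 1)).length =
      PArun M M.init (ws (k + 1)) := by
  have hpre : blocks ws hash k ++ ws (k + 1) <+: blocks ws hash (k + 1) :=
    List.prefix_append _ _
  rw [PAoutcome, PAoutcomeFrom_eq_PArun, map_range_interleave_of_prefix ws hash hpre,
    PArun_append, PArun_blocks_of_reset M hreset]

end Blocks

/-- If `(w_i)_{i ≥ 1}` are finite words such that reading `w_i` from the
    initial distribution of `C` puts mass `> 1 - 2^{-i}` on `q_f`, and `#`
    resets `C` to its initial distribution, then `v = w_1 # w_2 # w_3 # ⋯` is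
    weakly synchronizing for `C`. -/
theorem stmt_8 {Q A : Type*} [Fintype Q] [Nonempty Q] (C : PA Q A)
    (qf : Q) (hash : A) (hreset : ∀ q, C.trans q hash = C.init)
    (ws : ℕ → List A)
    (hws : ∀ i : ℕ, 1 ≤ i → PArun C C.init (ws i) qf > 1 - (2 : ℝ)⁻¹ ^ i) :
    Filter.limsup (fun n => dnorm (PAoutcome C (interleave ws hash) n))
      Filter.atTop = 1 := by
  set φ : ℕ → ℕ := fun k => (blocks ws hash k ++ ws (k + 1)).length
  have hφ : Tendsto φ atTop atTop := tendsto_atTop_mono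
    (fun k => (le_length_blocks ws hash k).trans (List.prefix_append _ _).length_le) tendsto_id
  have hlower : ∀ k, 1 - (2 : ℝ)⁻¹ ^ (k + 1) ≤ dnorm (PAoutcome C (interleave ws hash) (φ k)) :=
    fun k => by
      rw [PAoutcome_interleave_of_reset ws hash C hreset k]
      exact (hws (k + 1) (Nat.le_add_left 1 k)).le.trans (le_dnorm _ qf)
  have hgeom : Tendsto (fun k => 1 - (2 : ℝ)⁻¹ ^ (k + 1)) atTop (𝓝 1) := by
    have hpow : Tendsto (fun k => (2 : ℝ)⁻¹ ^ (k + 1)) atTop (𝓝 0) :=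
      (tendsto_pow_atTop_nhds_zero_of_lt_one (by norm_num) (by norm_num)).comp
        (tendsto_add_atTop_nat 1)
    simpa using tendsto_const_nhds.sub hpow
  refine limsup_eq_of_le_of_tendsto_comp (fun n => (isDist_PAoutcome C _ n).dnorm_le_one) hφ ?_
  exact tendsto_of_tendsto_of_tendsto_of_le_of_le hgeom tendsto_const_nhds hlower
    fun k => (isDist_PAoutcome C _ (φ k)).dnorm_le_one
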